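/- arXiv:math/0310097 — 5 statements merged into one kernel-verified Lean document; each statement's English description precedes it below -/
import Mathlib

section
/- (Proposition 3.2) Let G be a group, H a subgroup, Q a left transversal of H containing e, π : G → Q the projection, and x × y = π(x·y) the loop operation on Q. Fix u ∈ Q. Define Ψ_u : Q → Q·u⁻¹ by Ψ_u(x) = (u × x)·u⁻¹ = π(u·x)·u⁻¹, define the product ∗_u on Q·u⁻¹ by a ∗_u b = π(a·b·u)·u⁻¹ (this is the projection of a·b onto the section Q·u⁻¹ parallel to the subgroup u·H·u⁻¹), and define x ·_u y = π(u⁻¹·((u × x) × y)) (so that u × (x ·_u y) = (u × x) × y). Then Ψ_u is an isomorphism of these operations: for all x, y ∈ Q, Ψ_u(x ·_u y) = Ψ_u(x) ∗_u Ψ_u(y). -/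
/-!
Right multiplication by an element of `H` does not change the coset, so `π (g * h) = π g` for
`h ∈ H`. Since `π k ∈ k H`, this gives `π (g * π k) = π (g * k)`: inner projections can be
dropped. Both sides of the identity then collapse to `π (π (u * x) * y)`.
-/

structure IsTransversalProjection {G : Type*} [Group G] (H : Subgroup G) (Q : Set G)
    (π : G → G) : Prop where
  mem : ∀ g, π g ∈ Q
  inv_mul_mem : ∀ g, (π g)⁻¹ * g ∈ H
  eq_of_inv_mul_mem : ∀ g, ∀ q ∈ Q, q⁻¹ * g ∈ H → q = π g

namespace IsTransversalProjection

variable {G : Type*} [Group G] {H : Subgroup G} {Q : Set G} {π : G → G}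

theorem mul_of_mem (hπ : IsTransversalProjection H Q π) (g : G) {h : G} (hh : h ∈ H) :
    π (g * h) = π g := by
  refine (hπ.eq_of_inv_mul_mem (g * h) (π g) (hπ.mem g) ?_).symm
  rw [← mul_assoc]
  exact H.mul_mem (hπ.inv_mul_mem g) hh

theorem mul_proj (hπ : IsTransversalProjection H Q π) (g k : G) :
    π (g * π k) = π (g * k) := by
  have hk : g * π k = g * k * ((π k)⁻¹ * k)⁻¹ := by group
  rw [hk, hπ.mul_of_mem _ (H.inv_mem (hπ.inv_mul_mem k))]

theorem proj_proj (hπ : IsTransversalProjection H Q π) (g : G) : π (π g) = π g := by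
  simpa using hπ.mul_proj 1 g

end IsTransversalProjection

theorem psi_u_isomorphism_general
    {G : Type*} [Group G] (H : Subgroup G) (Q : Set G)
    (π : G → G)
    (hπQ : ∀ g : G, π g ∈ Q)
    (hπH : ∀ g : G, (π g)⁻¹ * g ∈ H)
    (hπuniq : ∀ g : G, ∀ q ∈ Q, q⁻¹ * g ∈ H → q = π g)
    (u : G) :
    ∀ x ∈ Q, ∀ y ∈ Q,
      π (u * π (u⁻¹ * π (π (u * x) * y))) * u⁻¹ =
        π ((π (u * x) * u⁻¹) * (π (u * y) * u⁻¹) * u) * u⁻¹ := by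
  intro x _ y _
  have hπ : IsTransversalProjection H Q π := ⟨hπQ, hπH, hπuniq⟩
  have hLHS : π (u * π (u⁻¹ * π (π (u * x) * y))) = π (π (u * x) * y) := by
    rw [hπ.mul_proj, mul_inv_cancel_left, hπ.proj_proj]
  have hRHS : π ((π (u * x) * u⁻¹) * (π (u * y) * u⁻¹) * u) = π (π (u * x) * y) := by
    calc π ((π (u * x) * u⁻¹) * (π (u * y) * u⁻¹) * u)
        = π (π (u * x) * u⁻¹ * π (u * y)) := by group
      _ = π (π (u * x) * u⁻¹ * (u * y)) := hπ.mul_proj _ _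
      _ = π (π (u * x) * y) := by group
  rw [hLHS, hRHS]

/-- Proposition 3.2: `Ψ_u : x ↦ (u × x) * u⁻¹` is an isomorphism from
`⟨Q, ·_u, e⟩` (where `x ·_u y = u \ ((u × x) × y)`) onto `⟨Q * u⁻¹, ∗_u, e⟩`
(where `a ∗_u b = π (a * b * u) * u⁻¹` is the projection of `a * b` onto the
section `Q * u⁻¹` parallel to `u * H * u⁻¹`). -/
theorem psi_u_isomorphism
    {G : Type*} [Group G] (H : Subgroup G) (Q : Set G)
    (heQ : (1 : G) ∈ Q)
    (π : G → G)
    (hπQ : ∀ g : G, π g ∈ Q)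
    (hπH : ∀ g : G, (π g)⁻¹ * g ∈ H)
    (hπuniq : ∀ g : G, ∀ q ∈ Q, q⁻¹ * g ∈ H → q = π g)
    (u : G) (hu : u ∈ Q) :
    ∀ x ∈ Q, ∀ y ∈ Q,
      π (u * π (u⁻¹ * π (π (u * x) * y))) * u⁻¹ =
        π ((π (u * x) * u⁻¹) * (π (u * y) * u⁻¹) * u) * u⁻¹ :=
  psi_u_isomorphism_general H Q π hπQ hπH hπuniq u
end

section
/- (Proposition 3.3) Let G be a group, H a subgroup, Q a left transversal of H containing e, π : G → Q the projection, and x × y = π(x·y) the loop operation on Q. Fix v ∈ Q and assume in addition that Q is a left transversal of the conjugate subgroup v·H·v⁻¹, with associated projection π''_v : G → Q (π''_v(g) is the unique element q ∈ Q with q⁻¹·g ∈ v·H·v⁻¹). Then for all x, y ∈ Q the element z = π''_v(x·y) satisfies z × v = x × (y × v); in other words, the composition law x ⊥_v y := (x × (y × v))/v obtained by right division by v coincides with the projection of x·y onto Q parallel to v·H·v⁻¹. -/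
/-! Both sides are `π`-projections, and `π` is constant on left cosets of `H`. Writing
`z = π'' (x * y)`, we have `z⁻¹ * (x * y) = v * h * v⁻¹` with `h ∈ H`, so `z * v` and `x * y * v`
lie in the same left coset of `H`; so do `x * π (y * v)` and `x * (y * v)`. -/

theorem proj_eq_of_inv_mul_mem {G : Type*} [Group G] {H : Subgroup G} {Q : Set G} {π : G → G}
    (hπQ : ∀ g : G, π g ∈ Q) (hπH : ∀ g : G, (π g)⁻¹ * g ∈ H)
    (hπuniq : ∀ g : G, ∀ q ∈ Q, q⁻¹ * g ∈ H → q = π g) {a b : G} (hab : a⁻¹ * b ∈ H) :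
    π a = π b := by
  refine (hπuniq a (π b) (hπQ b) ?_).symm
  have hsplit : (π b)⁻¹ * a = (π b)⁻¹ * b * (a⁻¹ * b)⁻¹ := by group
  rw [hsplit]
  exact mul_mem (hπH b) (inv_mem hab)

theorem proj_conj_composition_general
    {G : Type*} [Group G] (H : Subgroup G) (Q : Set G)
    (π : G → G)
    (hπQ : ∀ g : G, π g ∈ Q)
    (hπH : ∀ g : G, (π g)⁻¹ * g ∈ H)
    (hπuniq : ∀ g : G, ∀ q ∈ Q, q⁻¹ * g ∈ H → q = π g)
    (v : G)
    (π'' : G → G)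
    (hπ''H : ∀ g : G, ∃ h ∈ H, (π'' g)⁻¹ * g = v * h * v⁻¹) :
    ∀ x ∈ Q, ∀ y ∈ Q, π (π'' (x * y) * v) = π (x * π (y * v)) := by
  intro x _ y _
  obtain ⟨h, hh, hz⟩ := hπ''H (x * y)
  set z := π'' (x * y)
  apply proj_eq_of_inv_mul_mem hπQ hπH hπuniq
  have hconj : h = v⁻¹ * (z⁻¹ * (x * y)) * v := by rw [hz]; group
  have hcoset : (z * v)⁻¹ * (x * π (y * v)) = h * ((π (y * v))⁻¹ * (y * v))⁻¹ := by
    rw [hconj]; group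
  rw [hcoset]
  exact mul_mem hh (inv_mem (hπH _))

/-- Proposition 3.3: if `Q` is in addition a left transversal of the
conjugate subgroup `v * H * v⁻¹` with projection `π''_v : G → Q`, then for all
`x, y ∈ Q` the element `z = π''_v (x * y)` satisfies `z × v = x × (y × v)`,
i.e. the law `x ⊥_v y = (x × (y × v)) / v` coincides with the projection of
`x * y` onto `Q` parallel to `v * H * v⁻¹`. -/
theorem proj_conj_composition
    {G : Type*} [Group G] (H : Subgroup G) (Q : Set G)
    (heQ : (1 : G) ∈ Q)
    (π : G → G)
    (hπQ : ∀ g : G, π g ∈ Q)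
    (hπH : ∀ g : G, (π g)⁻¹ * g ∈ H)
    (hπuniq : ∀ g : G, ∀ q ∈ Q, q⁻¹ * g ∈ H → q = π g)
    (v : G) (hv : v ∈ Q)
    (π'' : G → G)
    (hπ''Q : ∀ g : G, π'' g ∈ Q)
    (hπ''H : ∀ g : G, ∃ h ∈ H, (π'' g)⁻¹ * g = v * h * v⁻¹)
    (hπ''uniq : ∀ g : G, ∀ q ∈ Q, (∃ h ∈ H, q⁻¹ * g = v * h * v⁻¹) → q = π'' g) :
    ∀ x ∈ Q, ∀ y ∈ Q, π (π'' (x * y) * v) = π (x * π (y * v)) :=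
  proj_conj_composition_general H Q π hπQ hπH hπuniq v π'' hπ''H
end

section
/- (Proposition 3.1, key identity) Let 𝔤 be a Lie algebra over a field of characteristic zero, Π : 𝔤 → 𝔤 a linear map, and R : 𝔤 × 𝔤 → 𝔤 a symmetric bilinear map. Define K(x,y) = ½Π[x,y], and the polarized cubic coefficients 2L(x,y,z) = −(1/6)Π[x,[y,z]] + Π[R(x,y),z] + (1/4)Π[x,Π[y,z]] − (1/6)Π[y,[x,z]] + Π[x,R(y,z)] + Π[y,R(x,z)] + (1/4)Π[y,Π[x,z]] and 2M(x,y,z) = (1/3)Π[y,[z,x]] + Π[x,R(y,z)] − (1/4)Π[y,Π[z,x]] + (1/3)Π[z,[y,x]] + Π[y,R(x,z)] + Π[z,R(x,y)] − (1/4)Π[z,Π[y,x]]. Then B(x,y,z) := 2L(x,y,z) − 2M(x,y,z) − K(x, K(y,z)) + K(K(x,y), z) = −½Π[[x,y],z] + ½Π[Π[x,y],z] + 2Π[R(x,y),z] for all x, y, z ∈ 𝔤. -/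
/-! The `R`-terms of `2L` and `2M` cancel in pairs, except `Π[R(x,y),z] − Π[z,R(x,y)]`, which
antisymmetry turns into `2Π[R(x,y),z]`; after expanding `[x,[y,z]]` by the Jacobi identity and
writing every bracket with `x` before `y` before `z`, the remaining terms combine linearly. -/

theorem B_identity_general
    {K : Type*} [Field K] [CharZero K]
    {L : Type*} [LieRing L] [LieAlgebra K L]
    (P : L →ₗ[K] L) (R : L →ₗ[K] L →ₗ[K] L)
    (x y z : L) :
    (-(1/6 : K) • P ⁅x, ⁅y, z⁆⁆ + P ⁅R x y, z⁆ + (1/4 : K) • P ⁅x, P ⁅y, z⁆⁆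
        - (1/6 : K) • P ⁅y, ⁅x, z⁆⁆ + P ⁅x, R y z⁆ + P ⁅y, R x z⁆
        + (1/4 : K) • P ⁅y, P ⁅x, z⁆⁆)
      - ((1/3 : K) • P ⁅y, ⁅z, x⁆⁆ + P ⁅x, R y z⁆ - (1/4 : K) • P ⁅y, P ⁅z, x⁆⁆
        + (1/3 : K) • P ⁅z, ⁅y, x⁆⁆ + P ⁅y, R x z⁆ + P ⁅z, R x y⁆
        - (1/4 : K) • P ⁅z, P ⁅y, x⁆⁆)
      - (1/2 : K) • P ⁅x, (1/2 : K) • P ⁅y, z⁆⁆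
      + (1/2 : K) • P ⁅(1/2 : K) • P ⁅x, y⁆, z⁆
    = -(1/2 : K) • P ⁅⁅x, y⁆, z⁆ + (1/2 : K) • P ⁅P ⁅x, y⁆, z⁆
      + (2 : K) • P ⁅R x y, z⁆ := by
  rw [leibniz_lie x y z]
  simp only [← lie_skew z, ← lie_skew y x, lie_neg, neg_lie, lie_smul, smul_lie, map_add,
    map_neg, map_smul]
  module

/-- Proposition 3.1, key identity: with `K(x,y) = ½Π[x,y]` and the
polarized cubic coefficients `2L`, `2M` as in the paper,
`B(x,y,z) = 2L(x,y,z) − 2M(x,y,z) − K(x,K(y,z)) + K(K(x,y),z)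
          = −½Π[[x,y],z] + ½Π[Π[x,y],z] + 2Π[R(x,y),z]`. -/
theorem B_identity
    {K : Type*} [Field K] [CharZero K]
    {L : Type*} [LieRing L] [LieAlgebra K L]
    (P : L →ₗ[K] L) (R : L →ₗ[K] L →ₗ[K] L)
    (hR : ∀ x y : L, R x y = R y x)
    (x y z : L) :
    (-(1/6 : K) • P ⁅x, ⁅y, z⁆⁆ + P ⁅R x y, z⁆ + (1/4 : K) • P ⁅x, P ⁅y, z⁆⁆
        - (1/6 : K) • P ⁅y, ⁅x, z⁆⁆ + P ⁅x, R y z⁆ + P ⁅y, R x z⁆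
        + (1/4 : K) • P ⁅y, P ⁅x, z⁆⁆)
      - ((1/3 : K) • P ⁅y, ⁅z, x⁆⁆ + P ⁅x, R y z⁆ - (1/4 : K) • P ⁅y, P ⁅z, x⁆⁆
        + (1/3 : K) • P ⁅z, ⁅y, x⁆⁆ + P ⁅y, R x z⁆ + P ⁅z, R x y⁆
        - (1/4 : K) • P ⁅z, P ⁅y, x⁆⁆)
      - (1/2 : K) • P ⁅x, (1/2 : K) • P ⁅y, z⁆⁆
      + (1/2 : K) • P ⁅(1/2 : K) • P ⁅x, y⁆, z⁆
    = -(1/2 : K) • P ⁅⁅x, y⁆, z⁆ + (1/2 : K) • P ⁅P ⁅x, y⁆, z⁆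
      + (2 : K) • P ⁅R x y, z⁆ :=
  B_identity_general P R x y z
end

section
/- (Section 5, antisymmetrization of d) Let 𝔤 be a Lie algebra over a field of characteristic zero, Π : 𝔤 → 𝔤 a linear map, and R : 𝔤 × 𝔤 → 𝔤 a bilinear map. Define d(ξ,η,ζ,τ) = ½Π[τ,[[ξ,η],ζ]] − ½Π[τ,Π[[ξ,η],ζ]] − ½Π[τ,[Π[ξ,η],ζ]] + ½Π[τ,Π[Π[ξ,η],ζ]] − ½Π[Π[τ,[ξ,η]],ζ] + ½Π[Π[τ,Π[ξ,η]],ζ] + 2Π[τ,[R(ξ,η),ζ]] − 2Π[τ,Π[R(ξ,η),ζ]] − 2Π[Π[τ,R(ξ,η)],ζ]. Then for all ξ, η, ζ, τ ∈ 𝔤, ½(d(ξ,η,ζ,τ) − d(ξ,η,τ,ζ)) = −(1/4)Π[[ξ,η],[ζ,τ]] + (1/4)Π[Π[ξ,η],[ζ,τ]] − Π[R(ξ,η),[ζ,τ]]. -/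
/-!
Write `X = ⁅ξ, η⁆` and `r = R ξ η`. The terms of `d` containing two occurrences of `Π` pair up,
after skew-symmetry, into expressions `Π⁅τ, Π⁅V, ζ⁆⁆ + Π⁅ζ, Π⁅V, τ⁆⁆` symmetric in `ζ, τ`, which
cancel in the antisymmetrization. What remains is `Π⁅τ, ⁅W, ζ⁆⁆` with `W = ½X - ½ΠX + 2r`, whose
antisymmetrization in `ζ, τ` is `-Π⁅W, ⁅ζ, τ⁆⁆` by the Jacobi identity.
-/

/-- The tensor `d = ∇²b` of formula (5.6). -/
def dTensor {K : Type*} [Field K] {L : Type*} [LieRing L] [LieAlgebra K L]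
    (P : L →ₗ[K] L) (R : L →ₗ[K] L →ₗ[K] L) (ξ η ζ τ : L) : L :=
  (1/2 : K) • P ⁅τ, ⁅⁅ξ, η⁆, ζ⁆⁆ - (1/2 : K) • P ⁅τ, P ⁅⁅ξ, η⁆, ζ⁆⁆
    - (1/2 : K) • P ⁅τ, ⁅P ⁅ξ, η⁆, ζ⁆⁆ + (1/2 : K) • P ⁅τ, P ⁅P ⁅ξ, η⁆, ζ⁆⁆
    - (1/2 : K) • P ⁅P ⁅τ, ⁅ξ, η⁆⁆, ζ⁆ + (1/2 : K) • P ⁅P ⁅τ, P ⁅ξ, η⁆⁆, ζ⁆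
    + (2 : K) • P ⁅τ, ⁅R ξ η, ζ⁆⁆ - (2 : K) • P ⁅τ, P ⁅R ξ η, ζ⁆⁆
    - (2 : K) • P ⁅P ⁅τ, R ξ η⁆, ζ⁆

theorem lie_lie_sub_lie_lie_swap {L : Type*} [LieRing L] (x y z : L) :
    ⁅z, ⁅x, y⁆⁆ - ⁅y, ⁅x, z⁆⁆ = -⁅x, ⁅y, z⁆⁆ := by
  rw [← lie_skew z ⁅x, y⁆, lie_lie]
  abel

section SymmetricPart

variable {K : Type*} [CommRing K] {L : Type*} [LieRing L] [LieAlgebra K L]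

theorem map_lie_map_lie_eq (P : L →ₗ[K] L) (x y z : L) :
    P ⁅P ⁅x, y⁆, z⁆ = P ⁅z, P ⁅y, x⁆⁆ := by
  rw [← lie_skew y x, map_neg, lie_neg, lie_skew]

def symmPart (P : L →ₗ[K] L) (V ζ τ : L) : L :=
  P ⁅τ, P ⁅V, ζ⁆⁆ + P ⁅ζ, P ⁅V, τ⁆⁆

theorem symmPart_comm (P : L →ₗ[K] L) (V ζ τ : L) : symmPart P V ζ τ = symmPart P V τ ζ :=
  add_comm _ _

end SymmetricPart

section Field

variable {K : Type*} [Field K] {L : Type*} [LieRing L] [LieAlgebra K L]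

theorem dTensor_eq (P : L →ₗ[K] L) (R : L →ₗ[K] L →ₗ[K] L) (ξ η ζ τ : L) :
    dTensor P R ξ η ζ τ =
      P ⁅τ, ⁅(1/2 : K) • ⁅ξ, η⁆ - (1/2 : K) • P ⁅ξ, η⁆ + (2 : K) • R ξ η, ζ⁆⁆
        - (1/2 : K) • symmPart P ⁅ξ, η⁆ ζ τ + (1/2 : K) • symmPart P (P ⁅ξ, η⁆) ζ τ
        - (2 : K) • symmPart P (R ξ η) ζ τ := by
  simp only [dTensor, symmPart, map_lie_map_lie_eq, add_lie, sub_lie, smul_lie, lie_add, lie_sub,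
    lie_smul, map_add, map_sub, map_smul]
  module

end Field

/-- Section 5, antisymmetrization of `d`:
`½(d(ξ,η,ζ,τ) − d(ξ,η,τ,ζ)) = −¼Π[[ξ,η],[ζ,τ]] + ¼Π[Π[ξ,η],[ζ,τ]] − Π[R(ξ,η),[ζ,τ]]`. -/
theorem d_antisymmetrization
    {K : Type*} [Field K] [CharZero K]
    {L : Type*} [LieRing L] [LieAlgebra K L]
    (P : L →ₗ[K] L) (R : L →ₗ[K] L →ₗ[K] L)
    (ξ η ζ τ : L) :
    (1/2 : K) • (dTensor P R ξ η ζ τ - dTensor P R ξ η τ ζ)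
      = -(1/4 : K) • P ⁅⁅ξ, η⁆, ⁅ζ, τ⁆⁆ + (1/4 : K) • P ⁅P ⁅ξ, η⁆, ⁅ζ, τ⁆⁆
        - P ⁅R ξ η, ⁅ζ, τ⁆⁆ := by
  have hantisymm : dTensor P R ξ η ζ τ - dTensor P R ξ η τ ζ =
      -P ⁅(1/2 : K) • ⁅ξ, η⁆ - (1/2 : K) • P ⁅ξ, η⁆ + (2 : K) • R ξ η, ⁅ζ, τ⁆⁆ := by
    rw [dTensor_eq, dTensor_eq, symmPart_comm P _ τ, symmPart_comm P _ τ, symmPart_comm P _ τ,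
      ← map_neg, ← lie_lie_sub_lie_lie_swap, map_sub]
    abel
  rw [hantisymm]
  simp only [add_lie, sub_lie, smul_lie, map_add, map_sub, map_smul]
  module
end

section
/- (Section 6, symmetrization of d for hexagonal loops) Let 𝔤 be a Lie algebra over a field of characteristic zero, Π : 𝔤 → 𝔤 a linear map, and R : 𝔤 × 𝔤 → 𝔤 a symmetric bilinear map satisfying the hexagonality condition Π[R(ξ,η),ζ] + Π[R(η,ζ),ξ] + Π[R(ζ,ξ),η] = 0 for all ξ, η, ζ ∈ 𝔤. Define d(ξ,η,ζ,τ) by formula (5.6): d(ξ,η,ζ,τ) = ½Π[τ,[[ξ,η],ζ]] − ½Π[τ,Π[[ξ,η],ζ]] − ½Π[τ,[Π[ξ,η],ζ]] + ½Π[τ,Π[Π[ξ,η],ζ]] − ½Π[Π[τ,[ξ,η]],ζ] + ½Π[Π[τ,Π[ξ,η]],ζ] + 2Π[τ,[R(ξ,η),ζ]] − 2Π[τ,Π[R(ξ,η),ζ]] − 2Π[Π[τ,R(ξ,η)],ζ]. Then for all x₁, x₂, x₃, τ ∈ 𝔤, the sum of d(x_{σ(1)}, x_{σ(2)}, x_{σ(3)},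 τ) over all six permutations σ of {1,2,3} equals 4 times the cyclic sum over (x₁,x₂,x₃) of (Π[τ,[R(x₁,x₂),x₃]] − Π[Π[τ,R(x₁,x₂)],x₃]). In particular, the symmetrization of d over its first three arguments vanishes if and only if the cyclic sum of Π[τ,[R(ξ,η),ζ]] − Π[Π[τ,R(ξ,η)],ζ] over ξ, η, ζ vanishes. -/
/-!
The `½`-terms of `d(ξ,η,ζ,τ)` depend on `(ξ,η)` only through the antisymmetric `[ξ,η]`, so they
cancel against those of `d(η,ξ,ζ,τ)`, while the `R`-terms double since `R` is symmetric. The six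
permutations form three such transposed pairs, one per cyclic position of `ζ`. In the resulting
cyclic sum the terms `Π[τ,Π[R(ξ,η),ζ]]` add up to `Π[τ, ·]` applied to the hexagonality sum, hence
vanish; and `4 ≠ 0` in characteristic zero gives the equivalence.
-/

section

variable {K : Type*} [Field K] {L : Type*} [LieRing L] [LieAlgebra K L]
  (P : L →ₗ[K] L) (R : L →ₗ[K] L →ₗ[K] L)

theorem dTensor_add_dTensor_swap (hR : ∀ x y : L, R x y = R y x) (ξ η ζ τ : L) :
    dTensor P R ξ η ζ τ + dTensor P R η ξ ζ τ
      = (4 : K) • (P ⁅τ, ⁅R ξ η, ζ⁆⁆ - P ⁅τ, P ⁅R ξ η, ζ⁆⁆ - P ⁅P ⁅τ, R ξ η⁆, ζ⁆) := by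
  simp only [dTensor, hR η ξ, ← lie_skew η ξ, map_neg, lie_neg, neg_lie]
  module

theorem dTensor_symmetrization (hR : ∀ x y : L, R x y = R y x)
    (hhex : ∀ ξ η ζ : L, P ⁅R ξ η, ζ⁆ + P ⁅R η ζ, ξ⁆ + P ⁅R ζ ξ, η⁆ = 0) (x₁ x₂ x₃ τ : L) :
    dTensor P R x₁ x₂ x₃ τ + dTensor P R x₁ x₃ x₂ τ + dTensor P R x₂ x₁ x₃ τ
        + dTensor P R x₂ x₃ x₁ τ + dTensor P R x₃ x₁ x₂ τ + dTensor P R x₃ x₂ x₁ τ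
      = (4 : K) • ((P ⁅τ, ⁅R x₁ x₂, x₃⁆⁆ - P ⁅P ⁅τ, R x₁ x₂⁆, x₃⁆)
          + (P ⁅τ, ⁅R x₂ x₃, x₁⁆⁆ - P ⁅P ⁅τ, R x₂ x₃⁆, x₁⁆)
          + (P ⁅τ, ⁅R x₃ x₁, x₂⁆⁆ - P ⁅P ⁅τ, R x₃ x₁⁆, x₂⁆)) := by
  have hcyc : P ⁅τ, P ⁅R x₁ x₂, x₃⁆⁆ + P ⁅τ, P ⁅R x₂ x₃, x₁⁆⁆ + P ⁅τ, P ⁅R x₃ x₁, x₂⁆⁆ = 0 := by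
    simpa only [lie_add, map_add, lie_zero, map_zero] using congrArg (fun v => P ⁅τ, v⁆) (hhex x₁ x₂ x₃)
  calc _ = (dTensor P R x₁ x₂ x₃ τ + dTensor P R x₂ x₁ x₃ τ)
          + (dTensor P R x₂ x₃ x₁ τ + dTensor P R x₃ x₂ x₁ τ)
          + (dTensor P R x₃ x₁ x₂ τ + dTensor P R x₁ x₃ x₂ τ) := by abel
    _ = _ := by
      simp only [dTensor_add_dTensor_swap P R hR]
      linear_combination (norm := module) (-4 : K) • hcyc

end

/-- Section 6, symmetrization of `d` for hexagonal loops: under the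
hexagonality condition (6.1), the symmetrization of `d` over its first three
arguments equals `4` times the cyclic sum of `Π[τ,[R(x₁,x₂),x₃]] − Π[Π[τ,R(x₁,x₂)],x₃]`;
in particular it vanishes iff that cyclic sum vanishes. -/
theorem d_symmetrization_hexagonal
    {K : Type*} [Field K] [CharZero K]
    {L : Type*} [LieRing L] [LieAlgebra K L]
    (P : L →ₗ[K] L) (R : L →ₗ[K] L →ₗ[K] L)
    (hR : ∀ x y : L, R x y = R y x)
    (hhex : ∀ ξ η ζ : L, P ⁅R ξ η, ζ⁆ + P ⁅R η ζ, ξ⁆ + P ⁅R ζ ξ, η⁆ = 0) :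
    (∀ x₁ x₂ x₃ τ : L,
      dTensor P R x₁ x₂ x₃ τ + dTensor P R x₁ x₃ x₂ τ + dTensor P R x₂ x₁ x₃ τ
        + dTensor P R x₂ x₃ x₁ τ + dTensor P R x₃ x₁ x₂ τ + dTensor P R x₃ x₂ x₁ τ
      = (4 : K) • ((P ⁅τ, ⁅R x₁ x₂, x₃⁆⁆ - P ⁅P ⁅τ, R x₁ x₂⁆, x₃⁆)
          + (P ⁅τ, ⁅R x₂ x₃, x₁⁆⁆ - P ⁅P ⁅τ, R x₂ x₃⁆, x₁⁆)
          + (P ⁅τ, ⁅R x₃ x₁, x₂⁆⁆ - P ⁅P ⁅τ, R x₃ x₁⁆, x₂⁆))) ∧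
    ((∀ x₁ x₂ x₃ τ : L,
        dTensor P R x₁ x₂ x₃ τ + dTensor P R x₁ x₃ x₂ τ + dTensor P R x₂ x₁ x₃ τ
          + dTensor P R x₂ x₃ x₁ τ + dTensor P R x₃ x₁ x₂ τ + dTensor P R x₃ x₂ x₁ τ
          = 0)
      ↔ (∀ ξ η ζ τ : L,
          (P ⁅τ, ⁅R ξ η, ζ⁆⁆ - P ⁅P ⁅τ, R ξ η⁆, ζ⁆)
            + (P ⁅τ, ⁅R η ζ, ξ⁆⁆ - P ⁅P ⁅τ, R η ζ⁆, ξ⁆)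
            + (P ⁅τ, ⁅R ζ ξ, η⁆⁆ - P ⁅P ⁅τ, R ζ ξ⁆, η⁆) = 0)) := by
  have hsym := dTensor_symmetrization P R hR hhex
  have h4 : (4 : K) ≠ 0 := by norm_num
  refine ⟨hsym, ?_⟩
  simp only [hsym, smul_eq_zero, h4, false_or]
end
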